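/- arXiv:2401.03556 — 2 statements merged into one kernel-verified Lean document; each statement's English description precedes it below -/
import Mathlib

section
/- Let κ ∈ [0,1], let T ≥ 1, and let S^G, S^L : {1,…,T} → ℝ with Φ defined by Φ(1) = 0 and Φ(t) = Φ(t−1) + κ·((S^G(t) − S^G(t−1)) + (S^L(t) − S^L(t−1))) for 2 ≤ t ≤ T. Define the market participants' benefit B := Σ_{t=2}^{T} (S^G(t) + S^L(t) − S^G(1) − S^L(1)) − Σ_{t=1}^{T} Φ(t). Then B = (1−κ) · Σ_{t=2}^{T} (S^G(t) + S^L(t) − S^G(1) − S^L(1)); moreover, if S^G(t) + S^L(t) ≥ S^G(1) + S^L(1) for every t, then both Σ_{t=1}^{T} Φ(t) ≥ 0 and B ≥ 0, and the incentive fee and market participants' benefit sum exactly to the Change in Surplus due to investment. -/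
/-! The recursion for the fee telescopes: `Φ t = κ · (S(t) − S(1))` with `S = S^G + S^L`, so the
total fee is `κ` times the Change in Surplus and the participants keep the fraction `1 − κ`. -/

open Finset

section IncentiveFee

variable {R : Type*} [CommRing R] {Φ f : ℕ → R} {κ : R} {a T : ℕ}

theorem eq_mul_sub_of_eq_add_mul_sub (h₀ : Φ a = 0)
    (hstep : ∀ t, a < t → t ≤ T → Φ t = Φ (t - 1) + κ * (f t - f (t - 1)))
    {t : ℕ} (hat : a ≤ t) (htT : t ≤ T) : Φ t = κ * (f t - f a) := by
  induction t, hat using Nat.le_induction with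
  | base => simp [h₀]
  | succ n han ih =>
    rw [hstep (n + 1) (by omega) htT, Nat.add_sub_cancel, ih (by omega)]
    ring

theorem sum_Icc_eq_mul_sum_Icc_sub (h₀ : Φ a = 0)
    (hstep : ∀ t, a < t → t ≤ T → Φ t = Φ (t - 1) + κ * (f t - f (t - 1))) :
    ∑ t ∈ Icc a T, Φ t = κ * ∑ t ∈ Icc (a + 1) T, (f t - f a) := by
  have hdrop_first : ∑ t ∈ Icc (a + 1) T, Φ t = ∑ t ∈ Icc a T, Φ t :=
    sum_subset (Icc_subset_Icc_left (Nat.le_succ a)) fun t ht ht' => by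
      obtain rfl : t = a := by simp only [mem_Icc] at ht ht'; omega
      exact h₀
  rw [← hdrop_first, mul_sum]
  refine sum_congr rfl fun t ht => ?_
  rw [mem_Icc] at ht
  exact eq_mul_sub_of_eq_add_mul_sub h₀ hstep (by omega) ht.2

end IncentiveFee

theorem market_participants_benefit_general
    (κ : ℝ) (hκ0 : 0 ≤ κ) (hκ1 : κ ≤ 1) (T : ℕ)
    (SG SL Φ : ℕ → ℝ)
    (hΦ1 : Φ 1 = 0)
    (hΦ : ∀ t : ℕ, 2 ≤ t → t ≤ T →
      Φ t = Φ (t - 1) + κ * ((SG t - SG (t - 1)) + (SL t - SL (t - 1))))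
    (B : ℝ)
    (hB : B = ∑ t ∈ Finset.Icc 2 T, (SG t + SL t - SG 1 - SL 1)
            - ∑ t ∈ Finset.Icc 1 T, Φ t) :
    B = (1 - κ) * ∑ t ∈ Finset.Icc 2 T, (SG t + SL t - SG 1 - SL 1) ∧
    ((∀ t : ℕ, SG t + SL t ≥ SG 1 + SL 1) →
      (0 ≤ ∑ t ∈ Finset.Icc 1 T, Φ t) ∧ (0 ≤ B) ∧
      (∑ t ∈ Finset.Icc 1 T, Φ t) + B =
        ∑ t ∈ Finset.Icc 2 T, (SG t + SL t - SG 1 - SL 1)) := by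
  set ΔS := ∑ t ∈ Icc 2 T, (SG t + SL t - SG 1 - SL 1)
  have hfee : ∑ t ∈ Icc 1 T, Φ t = κ * ΔS := by
    rw [sum_Icc_eq_mul_sum_Icc_sub (f := fun t => SG t + SL t) hΦ1
      fun t ht htT => by rw [hΦ t ht htT]; ring]
    congr 1
    exact sum_congr rfl fun t _ => by ring
  refine ⟨by rw [hB, hfee]; ring, fun hgain => ?_⟩
  have hΔS : 0 ≤ ΔS := sum_nonneg fun t _ => by linarith [hgain t]
  refine ⟨hfee ▸ mul_nonneg hκ0 hΔS, ?_, by rw [hB]; ring⟩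
  rw [hB, hfee, ← one_sub_mul]
  exact mul_nonneg (sub_nonneg.mpr hκ1) hΔS

/-- With `κ ∈ [0,1]` and the incentive fee `Φ` defined recursively
(`Φ 1 = 0`, `Φ t = Φ (t-1) + κ·(ΔS^G + ΔS^L)` for `2 ≤ t ≤ T`),
the market participants' benefit
`B = Σ_{t=2}^T (S^G t + S^L t − S^G 1 − S^L 1) − Σ_{t=1}^T Φ t`
equals `(1−κ)` times the Change in Surplus due to investment; moreover, if
`S^G t + S^L t ≥ S^G 1 + S^L 1` for every `t`, then the total incentive fee
and `B` are both nonnegative, and they sum exactly to the Change in Surplus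
due to investment. -/
theorem market_participants_benefit
    (κ : ℝ) (hκ0 : 0 ≤ κ) (hκ1 : κ ≤ 1) (T : ℕ) (hT : 1 ≤ T)
    (SG SL Φ : ℕ → ℝ)
    (hΦ1 : Φ 1 = 0)
    (hΦ : ∀ t : ℕ, 2 ≤ t → t ≤ T →
      Φ t = Φ (t - 1) + κ * ((SG t - SG (t - 1)) + (SL t - SL (t - 1))))
    (B : ℝ)
    (hB : B = ∑ t ∈ Finset.Icc 2 T, (SG t + SL t - SG 1 - SL 1)
            - ∑ t ∈ Finset.Icc 1 T, Φ t) :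
    B = (1 - κ) * ∑ t ∈ Finset.Icc 2 T, (SG t + SL t - SG 1 - SL 1) ∧
    ((∀ t : ℕ, SG t + SL t ≥ SG 1 + SL 1) →
      (0 ≤ ∑ t ∈ Finset.Icc 1 T, Φ t) ∧ (0 ≤ B) ∧
      (∑ t ∈ Finset.Icc 1 T, Φ t) + B =
        ∑ t ∈ Finset.Icc 2 T, (SG t + SL t - SG 1 - SL 1)) :=
  market_participants_benefit_general κ hκ0 hκ1 T SG SL Φ hΦ1 hΦ B hB
end

section
/- Let T ≥ 1, let r > −1 be a discount rate, let D be a nonempty set of investment decisions, and let MS, C, S^G, S^L : D → {1,…,T} → ℝ be the merchandising surplus, investment cost, generator surplus, and load surplus induced by each decision. Assume the first-year surpluses are independent of the decision: S^G(u)(1) = S^G(v)(1) and S^L(u)(1) = S^L(v)(1) for all u, v ∈ D. For κ = 1, define Φ(u)(t) := S^G(u)(t) + S^L(u)(t) − S^G(u)(1) − S^L(u)(1), the Transco profit TP(u) := Σ_{t=1}^{T} (1+r)^{−(t−1)} (MS(u)(t) + Φ(u)(t) − C(u)(t)), and social welfare SW(u) := Σ_{t=1}^{T} (1+r)^{−(t−1)}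 (MS(u)(t) + S^L(u)(t) + S^G(u)(t) − C(u)(t)). Then TP(u) − SW(u) is the same constant for all u ∈ D, and consequently u* ∈ D maximizes TP over D if and only if u* maximizes SW over D. -/
/-!
With κ = 1 the incentive fee is the generator-plus-load surplus minus its first-year value,
so in every period the Transco's cash flow falls short of the social-welfare cash flow by the
first-year surplus, which does not depend on the decision. Hence `TP - SW` is constant, and
functions differing by a constant have the same maximizers.
-/

open Finset

theorem forall_le_iff_of_sub_eq_const {D α : Type*} [AddCommGroup α] [LinearOrder α]
    [IsOrderedAddMonoid α] {f g : D → α} {c : α} (h : ∀ u, f u - g u = c) (x : D) :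
    (∀ u, f u ≤ f x) ↔ (∀ u, g u ≤ g x) := by
  have hf : ∀ u, f u = g u + c := fun u => by rw [← h u, add_sub_cancel]
  simp only [hf, add_le_add_iff_right]

theorem sum_mul_sub_sum_mul_of_sub_eq_const {ι R : Type*} [CommRing R] {s : Finset ι}
    {w a b : ι → R} {k : R} (h : ∀ t ∈ s, a t - b t = k) :
    ∑ t ∈ s, w t * a t - ∑ t ∈ s, w t * b t = k * ∑ t ∈ s, w t := by
  rw [← sum_sub_distrib, mul_sum]
  refine sum_congr rfl fun t ht => ?_
  rw [← mul_sub, h t ht, mul_comm]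

theorem hrgv_profit_max_iff_welfare_max_general
    (T : ℕ) (r : ℝ)
    (D : Type*) (hD : Nonempty D)
    (MS C SG SL : D → ℕ → ℝ)
    (hfirst : ∀ u v : D, SG u 1 = SG v 1 ∧ SL u 1 = SL v 1)
    (Φ : D → ℕ → ℝ)
    (hΦ : ∀ u t, Φ u t = SG u t + SL u t - SG u 1 - SL u 1)
    (TP SW : D → ℝ)
    (hTP : ∀ u, TP u = ∑ t ∈ Finset.Icc 1 T,
      ((1 + r) ^ (t - 1))⁻¹ * (MS u t + Φ u t - C u t))
    (hSW : ∀ u, SW u = ∑ t ∈ Finset.Icc 1 T,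
      ((1 + r) ^ (t - 1))⁻¹ * (MS u t + SL u t + SG u t - C u t)) :
    (∃ c : ℝ, ∀ u : D, TP u - SW u = c) ∧
    (∀ ustar : D, (∀ u : D, TP u ≤ TP ustar) ↔ (∀ u : D, SW u ≤ SW ustar)) := by
  obtain ⟨u₀⟩ := hD
  have hdiff : ∀ u, TP u - SW u =
      -(SG u₀ 1 + SL u₀ 1) * ∑ t ∈ Icc 1 T, ((1 + r) ^ (t - 1))⁻¹ := fun u => by
    rw [hTP, hSW, ← (hfirst u u₀).1, ← (hfirst u u₀).2]
    exact sum_mul_sub_sum_mul_of_sub_eq_const fun t _ => by rw [hΦ]; ring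
  exact ⟨⟨_, hdiff⟩, forall_le_iff_of_sub_eq_const hdiff⟩

/-- Under the original H-R-G-V mechanism (κ = 1), where the incentive fee is
`Φ u t = S^G u t + S^L u t − S^G u 1 − S^L u 1`, the Transco profit
`TP u = Σ_{t=1}^T (1+r)^{−(t−1)} (MS u t + Φ u t − C u t)` and social welfare
`SW u = Σ_{t=1}^T (1+r)^{−(t−1)} (MS u t + S^L u t + S^G u t − C u t)`
differ by a constant independent of the investment decision `u` (provided the
first-year surpluses are decision-independent); consequently a decision
maximizes the Transco's profit iff it maximizes social welfare. -/
theorem hrgv_profit_max_iff_welfare_max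
    (T : ℕ) (hT : 1 ≤ T) (r : ℝ) (hr : -1 < r)
    (D : Type*) (hD : Nonempty D)
    (MS C SG SL : D → ℕ → ℝ)
    (hfirst : ∀ u v : D, SG u 1 = SG v 1 ∧ SL u 1 = SL v 1)
    (Φ : D → ℕ → ℝ)
    (hΦ : ∀ u t, Φ u t = SG u t + SL u t - SG u 1 - SL u 1)
    (TP SW : D → ℝ)
    (hTP : ∀ u, TP u = ∑ t ∈ Finset.Icc 1 T,
      ((1 + r) ^ (t - 1))⁻¹ * (MS u t + Φ u t - C u t))
    (hSW : ∀ u, SW u = ∑ t ∈ Finset.Icc 1 T,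
      ((1 + r) ^ (t - 1))⁻¹ * (MS u t + SL u t + SG u t - C u t)) :
    (∃ c : ℝ, ∀ u : D, TP u - SW u = c) ∧
    (∀ ustar : D, (∀ u : D, TP u ≤ TP ustar) ↔ (∀ u : D, SW u ≤ SW ustar)) :=
  hrgv_profit_max_iff_welfare_max_general T r D hD MS C SG SL hfirst Φ hΦ TP SW hTP hSW
end
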